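/- Define h∧(y) := (M_{0,w}^ε(|y|_+^2))^{1/2} − (M_{p,w}^ε(|y|_-^2))^{1/2} and h∨(y) := −h∧(−y). Then h∨(y) > 0 if and only if max_i y_i > 0, and h∨(y) < 0 if and only if max_i y_i < 0. -/

import Mathlib

open Finset Real Filter Topology

noncomputable def M0 {n : ℕ} (ε : ℝ) (w : Fin n → ℕ) (z : Fin n → ℝ) : ℝ :=
  (ε ^ (∑ i, w i) + ∏ i, z i ^ w i) ^ ((1 : ℝ) / (∑ i, w i))

noncomputable def Mp {n : ℕ} (ε : ℝ) (p : ℕ) (w : Fin n → ℕ) (z : Fin n → ℝ) : ℝ :=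
  (ε ^ p + (1 / (∑ i, (w i : ℝ))) * ∑ i, (w i : ℝ) * z i ^ p) ^ ((1 : ℝ) / p)

noncomputable def posSq {n : ℕ} (y : Fin n → ℝ) : Fin n → ℝ := fun i => max (y i) 0 ^ 2

noncomputable def negSq {n : ℕ} (y : Fin n → ℝ) : Fin n → ℝ := fun i => min (y i) 0 ^ 2

noncomputable def hConj {n : ℕ} (ε : ℝ) (p : ℕ) (w : Fin n → ℕ) (y : Fin n → ℝ) : ℝ :=
  M0 ε w (posSq y) ^ ((1 : ℝ) / 2) - Mp ε p w (negSq y) ^ ((1 : ℝ) / 2)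

noncomputable def hDisj {n : ℕ} (ε : ℝ) (p : ℕ) (w : Fin n → ℕ) (y : Fin n → ℝ) : ℝ :=
  - hConj ε p w (fun i => - y i)

/-!
For nonnegative `z` both smoothed means are at least `ε`, and `Mp ε p w z` exceeds `ε` iff some
`z i` is positive, while `M0 ε w z` exceeds `ε` iff every `z i` is. Now
`hDisj y = Mp (posSq y) ^ (1/2) - M0 (negSq y) ^ (1/2)`, and at most one of the two means can
exceed `ε`, since `y` cannot have a positive entry and be entrywise negative at once. So
`hDisj y > 0` iff `y` has a positive entry, and `hDisj y < 0` iff `y < 0`.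
-/

section RootOfPowAdd

variable {ε c : ℝ} {k : ℕ}

lemma le_rpow_one_div_pow_add (hε : 0 ≤ ε) (hc : 0 ≤ c) (hk : k ≠ 0) :
    ε ≤ (ε ^ k + c) ^ ((1 : ℝ) / k) := by
  calc ε = (ε ^ k) ^ ((1 : ℝ) / k) := by rw [one_div, pow_rpow_inv_natCast hε hk]
    _ ≤ (ε ^ k + c) ^ ((1 : ℝ) / k) := by gcongr; linarith

lemma lt_rpow_one_div_pow_add_iff (hε : 0 ≤ ε) (hc : 0 ≤ c) (hk : k ≠ 0) :
    ε < (ε ^ k + c) ^ ((1 : ℝ) / k) ↔ 0 < c := by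
  nth_rw 1 [← pow_rpow_inv_natCast hε hk, ← one_div]
  rw [rpow_lt_rpow_iff (by positivity) (by positivity) (by positivity), lt_add_iff_pos_right]

end RootOfPowAdd

section SmoothedMeans

variable {n : ℕ} {ε : ℝ} {p : ℕ} {w : Fin n → ℕ} {z : Fin n → ℝ}

lemma Mp_radicand_nonneg (hz : ∀ i, 0 ≤ z i) :
    0 ≤ (1 / ∑ i, (w i : ℝ)) * ∑ i, (w i : ℝ) * z i ^ p :=
  mul_nonneg (by positivity) (sum_nonneg fun i _ => by have := hz i; positivity)

lemma le_Mp (hε : 0 ≤ ε) (hp : p ≠ 0) (hz : ∀ i, 0 ≤ z i) : ε ≤ Mp ε p w z :=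
  le_rpow_one_div_pow_add hε (Mp_radicand_nonneg hz) hp

lemma lt_Mp_iff (hε : 0 ≤ ε) (hp : p ≠ 0) (hw : ∀ i, 0 < w i) (hz : ∀ i, 0 ≤ z i) :
    ε < Mp ε p w z ↔ ∃ i, 0 < z i := by
  have hterm_pos : ∀ i, 0 < (w i : ℝ) * z i ^ p ↔ 0 < z i := fun i => by
    rw [mul_pos_iff_of_pos_left (by exact_mod_cast hw i), (pow_nonneg (hz i) p).lt_iff_ne',
      (hz i).lt_iff_ne', pow_ne_zero_iff hp]
  have hsum_pos : 0 < ∑ i, (w i : ℝ) * z i ^ p ↔ ∃ i, 0 < z i := by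
    rw [sum_pos_iff_of_nonneg fun i _ => by have := hz i; positivity]
    simp only [mem_univ, true_and, hterm_pos]
  unfold Mp
  rw [lt_rpow_one_div_pow_add_iff hε (Mp_radicand_nonneg hz) hp, ← hsum_pos]
  constructor
  · exact fun h => pos_of_mul_pos_right h (by positivity)
  · intro h
    obtain ⟨i, hi⟩ := hsum_pos.mp h
    have hW : (0 : ℝ) < ∑ i, (w i : ℝ) :=
      sum_pos' (fun i _ => by positivity) ⟨i, mem_univ i, by exact_mod_cast hw i⟩
    positivity

lemma sum_ne_zero_of_pos (hn : 0 < n) (hw : ∀ i, 0 < w i) : ∑ i, w i ≠ 0 :=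
  (sum_pos (fun i _ => hw i) ⟨⟨0, hn⟩, mem_univ _⟩).ne'

lemma le_M0 (hε : 0 ≤ ε) (hn : 0 < n) (hw : ∀ i, 0 < w i) (hz : ∀ i, 0 ≤ z i) :
    ε ≤ M0 ε w z :=
  le_rpow_one_div_pow_add hε (prod_nonneg fun i _ => pow_nonneg (hz i) _)
    (sum_ne_zero_of_pos hn hw)

lemma lt_M0_iff (hε : 0 ≤ ε) (hn : 0 < n) (hw : ∀ i, 0 < w i) (hz : ∀ i, 0 ≤ z i) :
    ε < M0 ε w z ↔ ∀ i, 0 < z i := by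
  have hprod : 0 ≤ ∏ i, z i ^ w i := prod_nonneg fun i _ => pow_nonneg (hz i) _
  unfold M0
  rw [lt_rpow_one_div_pow_add_iff hε hprod (sum_ne_zero_of_pos hn hw), hprod.lt_iff_ne', ne_eq,
    prod_eq_zero_iff]
  simp only [mem_univ, true_and, not_exists, pow_eq_zero_iff (hw _).ne']
  exact forall_congr' fun i => (hz i).lt_iff_ne'.symm

end SmoothedMeans

section PositiveNegativeParts

variable {n : ℕ} (y : Fin n → ℝ)

lemma posSq_nonneg (i : Fin n) : 0 ≤ posSq y i := sq_nonneg _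

lemma negSq_nonneg (i : Fin n) : 0 ≤ negSq y i := sq_nonneg _

lemma posSq_pos_iff (i : Fin n) : 0 < posSq y i ↔ 0 < y i := by
  simp [posSq, sq_pos_iff]

lemma negSq_pos_iff (i : Fin n) : 0 < negSq y i ↔ y i < 0 := by
  simp [negSq, sq_pos_iff]

lemma posSq_neg : posSq (fun i => - y i) = negSq y := by
  funext i
  rw [posSq, negSq, ← neg_sq, ← min_neg_neg, neg_neg, neg_zero]

lemma negSq_neg : negSq (fun i => - y i) = posSq y := by
  funext i
  rw [posSq, negSq, ← neg_sq, ← max_neg_neg, neg_neg, neg_zero]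

end PositiveNegativeParts

lemma hDisj_eq {n : ℕ} (ε : ℝ) (p : ℕ) (w : Fin n → ℕ) (y : Fin n → ℝ) :
    hDisj ε p w y = Mp ε p w (posSq y) ^ ((1 : ℝ) / 2) - M0 ε w (negSq y) ^ ((1 : ℝ) / 2) := by
  rw [hDisj, hConj, posSq_neg, negSq_neg, neg_sub]

lemma lt_iff_lt_of_not_both_gt {ε a b : ℝ} (hb : ε ≤ b)
    (h : ¬(ε < a ∧ ε < b)) : b < a ↔ ε < a :=
  ⟨hb.trans_lt, fun hεa => (not_lt.mp fun hεb => h ⟨hεa, hεb⟩).trans_lt hεa⟩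

theorem hDisj_sign_iff_max_sign {n : ℕ} (hn : 0 < n) (ε : ℝ) (hε : 0 < ε)
    (p : ℕ) (hp : 0 < p) (w : Fin n → ℕ) (hw : ∀ i, 0 < w i) (y : Fin n → ℝ) :
    (0 < hDisj ε p w y ↔
      0 < Finset.univ.sup' (Finset.univ_nonempty_iff.mpr ⟨⟨0, hn⟩⟩) y) ∧
    (hDisj ε p w y < 0 ↔
      Finset.univ.sup' (Finset.univ_nonempty_iff.mpr ⟨⟨0, hn⟩⟩) y < 0) := by
  have hMp : ε ≤ Mp ε p w (posSq y) := le_Mp hε.le hp.ne' (posSq_nonneg y)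
  have hM0 : ε ≤ M0 ε w (negSq y) := le_M0 hε.le hn hw (negSq_nonneg y)
  have hMp_lt : ε < Mp ε p w (posSq y) ↔ ∃ i, 0 < y i := by
    simpa only [posSq_pos_iff] using lt_Mp_iff hε.le hp.ne' hw (posSq_nonneg y)
  have hM0_lt : ε < M0 ε w (negSq y) ↔ ∀ i, y i < 0 := by
    simpa only [negSq_pos_iff] using lt_M0_iff hε.le hn hw (negSq_nonneg y)
  have h_not_both : ¬(ε < Mp ε p w (posSq y) ∧ ε < M0 ε w (negSq y)) := by
    rw [hMp_lt, hM0_lt]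
    rintro ⟨⟨i, hi⟩, hneg⟩
    exact (hneg i).not_gt hi
  rw [lt_sup'_iff, sup'_lt_iff, hDisj_eq, sub_pos, sub_neg,
    rpow_lt_rpow_iff (by linarith) (by linarith) (by norm_num),
    rpow_lt_rpow_iff (by linarith) (by linarith) (by norm_num),
    lt_iff_lt_of_not_both_gt hM0 h_not_both,
    lt_iff_lt_of_not_both_gt hMp (And.comm.not.mp h_not_both), hMp_lt, hM0_lt]
  simp only [mem_univ, true_and, forall_const]
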